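/- arXiv:2408.14914 — 3 statements merged into one kernel-verified Lean document; each statement's English description precedes it below -/
import Mathlib

section
/- Let d ≥ 1 be an integer. For i ∈ {1,2} let g_i : (0,∞) × (0,∞) → [0,1] be functions such that (a) for each ν > 0 the map r ↦ g_i(r,ν) is nonincreasing, (b) for each r > 0 the map ν ↦ g_i(r,ν) is nonincreasing, and (c) lim_{r→∞} g_i(r,ν) = 0 for every ν > 0. Then there exists a function δ* : (0,∞) → (0,∞) with lim_{ε→0} δ*(ε)/ε = 0 and with the following property: for every function δ : (0,∞) → (0,∞) satisfying δ(ε) ≤ δ*(ε) for all ε sufficiently close to 0, one has lim_{ε→0} ε^{−d} g_i(ε/δ(ε), ν) = 0 for every ν > 0 and every i ∈ {1,2}. -/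
/-!
Write `δ*(ε) = ε / R(ε)`. Then `δ ≤ δ*` means `ε / δ(ε) ≥ R(ε)`, so by monotonicity in `r` it
suffices to pick `R(ε) ≥ ε⁻¹` with `ε⁻ᵈ gᵢ(R(ε), ν) → 0`, and by monotonicity in `ν` it suffices
to do so for the countably many `ν = 1/(m+1)`. Such an `R` is obtained by a diagonal argument:
at `ε` take `R(ε)` so large that `ε⁻ᵈ gᵢ(R(ε), 1/(m+1)) < 1/(⌈ε⁻¹⌉ + 1)` for the finitely many
`(i, m)` whose code is at most `⌈ε⁻¹⌉`.
-/

open Filter Topology Set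

theorem exists_ge_forall_tendsto_mul_comp_zero {α ι : Type*} [Countable ι] {l : Filter α}
    {N : α → ℕ} (hN : Tendsto N l atTop) (w b : α → ℝ) {φ : ι → ℝ → ℝ}
    (hφ : ∀ k, Tendsto (φ k) atTop (𝓝 0)) :
    ∃ R : α → ℝ, (∀ x, b x ≤ R x) ∧ ∀ k, Tendsto (fun x => w x * φ k (R x)) l (𝓝 0) := by
  obtain ⟨e, he⟩ := exists_injective_nat ι
  have hR : ∀ x, ∃ r, b x ≤ r ∧ ∀ k ∈ {k | e k ≤ N x}, |w x * φ k r| < 1 / ((N x : ℝ) + 1) := by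
    intro x
    have hfin : {k | e k ≤ N x}.Finite := (Set.finite_le_nat (N x)).preimage he.injOn
    have hsmall : ∀ k, ∀ᶠ r in atTop, |w x * φ k r| < 1 / ((N x : ℝ) + 1) := by
      intro k
      have hk := ((hφ k).const_mul (w x)).abs
      rw [mul_zero, abs_zero] at hk
      exact hk.eventually (gt_mem_nhds (by positivity))
    exact ((eventually_ge_atTop (b x)).and (hfin.eventually_all.2 fun k _ => hsmall k)).exists
  choose R hbR hR using hR
  refine ⟨R, hbR, fun k => squeeze_zero_norm' ?_ (tendsto_one_div_add_atTop_nhds_zero_nat.comp hN)⟩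
  filter_upwards [hN.eventually_ge_atTop (e k)] with x hx
  exact (hR x k hx).le

theorem existence_of_scales_general (d : ℕ) (g : Fin 2 → ℝ → ℝ → ℝ)
    (hmono_r : ∀ i : Fin 2, ∀ ν > (0 : ℝ), ∀ r s : ℝ, 0 < r → r ≤ s → g i s ν ≤ g i r ν)
    (hmono_nu : ∀ i : Fin 2, ∀ r > (0 : ℝ), ∀ ν ν' : ℝ, 0 < ν → ν ≤ ν' → g i r ν' ≤ g i r ν)
    (hlim : ∀ i : Fin 2, ∀ ν > (0 : ℝ), Tendsto (fun r => g i r ν) atTop (𝓝 0)) :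
    ∃ δstar : ℝ → ℝ, (∀ ε > (0 : ℝ), 0 < δstar ε) ∧
      Tendsto (fun ε => δstar ε / ε) (𝓝[>] (0 : ℝ)) (𝓝 0) ∧
      ∀ δ : ℝ → ℝ, (∀ ε > (0 : ℝ), 0 < δ ε) →
        (∀ᶠ ε in 𝓝[>] (0 : ℝ), δ ε ≤ δstar ε) →
        ∀ ν > (0 : ℝ), ∀ i : Fin 2,
          Tendsto (fun ε => (ε ^ d)⁻¹ * g i (ε / δ ε) ν) (𝓝[>] (0 : ℝ)) (𝓝 0) := by
  have hg_nonneg : ∀ i, ∀ ν > (0 : ℝ), ∀ r > (0 : ℝ), 0 ≤ g i r ν := fun i ν hν r hr =>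
    le_of_tendsto (hlim i ν hν) ((eventually_ge_atTop r).mono (hmono_r i ν hν r · hr))
  obtain ⟨R, hR_ge, hR⟩ := exists_ge_forall_tendsto_mul_comp_zero
    (tendsto_nat_ceil_atTop.comp tendsto_inv_nhdsGT_zero) (fun ε : ℝ => (ε ^ d)⁻¹) (·⁻¹)
    (φ := fun k : Fin 2 × ℕ => fun r => g k.1 r (1 / (k.2 + 1)))
    fun k => hlim k.1 _ Nat.one_div_pos_of_nat
  have hR_pos : ∀ ε > (0 : ℝ), 0 < R ε := fun ε hε => (inv_pos.2 hε).trans_le (hR_ge ε)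
  refine ⟨fun ε => ε / R ε, fun ε hε => div_pos hε (hR_pos ε hε), ?_, ?_⟩
  · refine (tendsto_inv_atTop_zero.comp (tendsto_atTop_mono hR_ge tendsto_inv_nhdsGT_zero)).congr' ?_
    filter_upwards [self_mem_nhdsWithin] with ε (hε : 0 < ε)
    simp [div_div_cancel_left' hε.ne']
  · intro δ hδ hδ_le ν hν i
    obtain ⟨m, hm⟩ := exists_nat_one_div_lt hν
    refine squeeze_zero' ?_ ?_ (hR (i, m))
    · filter_upwards [self_mem_nhdsWithin] with ε (hε : 0 < ε)
      exact mul_nonneg (by positivity) (hg_nonneg i ν hν _ (div_pos hε (hδ ε hε)))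
    · filter_upwards [self_mem_nhdsWithin, hδ_le] with ε (hε : 0 < ε) hle
      have hR_le : R ε ≤ ε / δ ε := (le_div_comm₀ (hR_pos ε hε) (hδ ε hε)).2 hle
      gcongr
      exact (hmono_r i ν hν _ _ (hR_pos ε hε) hR_le).trans
        (hmono_nu i _ (hR_pos ε hε) _ _ Nat.one_div_pos_of_nat hm.le)

/-- **Existence of scales** (Proposition 1.2, abstract form).
Given two decay profiles `g i (r, ν) ∈ [0,1]`, nonincreasing in `r` and in `ν`, tending to `0`
as `r → ∞` for each fixed `ν > 0`, there is a scale `δ*` with `δ*(ε)/ε → 0` such that for every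
scale `δ ≤ δ*` near `0`, one has `ε ^ (-d) * g i (ε / δ ε) ν → 0` as `ε → 0⁺`, for all `ν > 0`. -/
theorem existence_of_scales (d : ℕ) (hd : 1 ≤ d) (g : Fin 2 → ℝ → ℝ → ℝ)
    (hrange : ∀ i : Fin 2, ∀ r > (0 : ℝ), ∀ ν > (0 : ℝ), g i r ν ∈ Set.Icc (0 : ℝ) 1)
    (hmono_r : ∀ i : Fin 2, ∀ ν > (0 : ℝ), ∀ r s : ℝ, 0 < r → r ≤ s → g i s ν ≤ g i r ν)
    (hmono_nu : ∀ i : Fin 2, ∀ r > (0 : ℝ), ∀ ν ν' : ℝ, 0 < ν → ν ≤ ν' → g i r ν' ≤ g i r ν)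
    (hlim : ∀ i : Fin 2, ∀ ν > (0 : ℝ), Tendsto (fun r => g i r ν) atTop (𝓝 0)) :
    ∃ δstar : ℝ → ℝ, (∀ ε > (0 : ℝ), 0 < δstar ε) ∧
      Tendsto (fun ε => δstar ε / ε) (𝓝[>] (0 : ℝ)) (𝓝 0) ∧
      ∀ δ : ℝ → ℝ, (∀ ε > (0 : ℝ), 0 < δ ε) →
        (∀ᶠ ε in 𝓝[>] (0 : ℝ), δ ε ≤ δstar ε) →
        ∀ ν > (0 : ℝ), ∀ i : Fin 2,
          Tendsto (fun ε => (ε ^ d)⁻¹ * g i (ε / δ ε) ν) (𝓝[>] (0 : ℝ)) (𝓝 0) :=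
  existence_of_scales_general d g hmono_r hmono_nu hlim
end

section
/- Let 0 < λ ≤ Λ and 0 < θ_* ≤ θ^*, and let a, θ : ℝ → ℝ be Lebesgue measurable with λ ≤ a(y) ≤ Λ and θ_* ≤ θ(y) ≤ θ^* for almost every y ∈ ℝ. Assume that for every M ≥ 1 there exists x ∈ ℝ such that a(y) = λ and θ(y) = θ_* for almost every y ∈ [x, x + M). Then for every γ > 0, inf { ∫_ℝ ( ½ a(x/γ) u′(x)² + θ(x/γ) W(u(x)) ) dx : u ∈ C¹(ℝ), lim_{x→−∞} u(x) = −1, lim_{x→+∞} u(x) = +1 } = σ_W √(θ_* λ). -/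
open MeasureTheory Filter Topology
open scoped ENNReal

/-- Admissible one-dimensional phase transition profiles: `C¹` functions connecting `-1`
at `-∞` to `+1` at `+∞`. -/
def AdmissibleProfile (u : ℝ → ℝ) : Prop :=
  ContDiff ℝ 1 u ∧ Tendsto u atBot (𝓝 (-1)) ∧ Tendsto u atTop (𝓝 1)

/-- The homogeneous surface tension `σ_W`, with values in `[0, ∞]`. -/
noncomputable def sigmaW (W : ℝ → ℝ) : ℝ≥0∞ :=
  ⨅ (u : ℝ → ℝ) (_ : AdmissibleProfile u),
    ∫⁻ x : ℝ, ENNReal.ofReal ((deriv u x) ^ 2 / 2 + W (u x))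

/-!
Pointwise, the coefficients dominate their minimal values `λ` and `θ_*`, so the energy in the
medium dominates the homogeneous energy with coefficients `λ, θ_*`; for constant coefficients
`α, β` the substitution `u ↦ u (√(β/α) ·)` shows that the infimum of the latter is
`√(αβ) σ_W`. Conversely, a profile of finite homogeneous energy can be translated into an
arbitrarily long stretch where the medium is homogeneous with the minimal values; outside the
stretch its energy density is at most a fixed multiple of the homogeneous one, whose integral
over the complement of `[-R, R]` tends to zero.
-/

noncomputable section

def energyDensity (W α β u : ℝ → ℝ) (x : ℝ) : ℝ≥0∞ :=
  ENNReal.ofReal (α x * deriv u x ^ 2 / 2 + β x * W (u x))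

def energy (W α β u : ℝ → ℝ) : ℝ≥0∞ :=
  ∫⁻ x, energyDensity W α β u x

def surfaceTension (W α β : ℝ → ℝ) : ℝ≥0∞ :=
  ⨅ (u : ℝ → ℝ) (_ : AdmissibleProfile u), energy W α β u

def HasLongStretches (P : ℝ → Prop) : Prop :=
  ∀ M : ℝ, 1 ≤ M → ∃ x : ℝ, ∀ᵐ y ∂(volume : Measure ℝ), y ∈ Set.Ico x (x + M) → P y

end

theorem AdmissibleProfile.comp_mul_left {u : ℝ → ℝ} (hu : AdmissibleProfile u) {c : ℝ}
    (hc : 0 < c) : AdmissibleProfile (fun y => u (c * y)) :=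
  ⟨hu.1.comp (contDiff_const.mul contDiff_id),
    hu.2.1.comp (tendsto_id.const_mul_atBot hc), hu.2.2.comp (tendsto_id.const_mul_atTop hc)⟩

theorem AdmissibleProfile.comp_sub_const {u : ℝ → ℝ} (hu : AdmissibleProfile u) (t : ℝ) :
    AdmissibleProfile (fun y => u (y - t)) :=
  ⟨hu.1.comp (contDiff_id.sub contDiff_const),
    hu.2.1.comp (tendsto_atBot_add_const_right _ (-t) tendsto_id),
    hu.2.2.comp (tendsto_atTop_add_const_right _ (-t) tendsto_id)⟩

theorem iInf_admissibleProfile_comp_mul_left (F : (ℝ → ℝ) → ℝ≥0∞) {c : ℝ} (hc : 0 < c) :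
    ⨅ (u : ℝ → ℝ) (_ : AdmissibleProfile u), F (fun y => u (c * y))
      = ⨅ (u : ℝ → ℝ) (_ : AdmissibleProfile u), F u := by
  refine le_antisymm (le_iInf₂ fun u hu => ?_)
    (le_iInf₂ fun u hu => iInf₂_le _ (hu.comp_mul_left hc))
  convert iInf₂_le (fun y => u (c⁻¹ * y)) (hu.comp_mul_left (inv_pos.mpr hc)) using 2
  simp [inv_mul_cancel_left₀ hc.ne']

theorem Real.quasiMeasurePreserving_div_const {γ : ℝ} (hγ : γ ≠ 0) :
    Measure.QuasiMeasurePreserving (fun x : ℝ => x / γ) volume volume := by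
  simp_rw [div_eq_inv_mul]
  refine ⟨measurable_const_mul _, ?_⟩
  rw [Real.map_volume_mul_left (inv_ne_zero hγ)]
  exact Measure.smul_absolutelyContinuous

theorem Real.lintegral_comp_mul_left (f : ℝ → ℝ≥0∞) {c : ℝ} (hc : c ≠ 0) :
    ∫⁻ x, f (c * x) = ENNReal.ofReal |c⁻¹| * ∫⁻ x, f x := by
  rw [← smul_eq_mul, ← lintegral_smul_measure, ← Real.map_volume_mul_left hc]
  exact (lintegral_map_equiv f (Homeomorph.mulLeft₀ c hc).toMeasurableEquiv).symm

theorem tendsto_setLIntegral_compl_Icc {f : ℝ → ℝ≥0∞} (hf : ∫⁻ x, f x ≠ ∞) :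
    Tendsto (fun R : ℝ => ∫⁻ x in (Set.Icc (-R) R)ᶜ, f x) atTop (𝓝 0) := by
  have hanti : Antitone fun R : ℝ => (Set.Icc (-R) R)ᶜ := fun R S hRS =>
    Set.compl_subset_compl.mpr (Set.Icc_subset_Icc (neg_le_neg hRS) hRS)
  have hempty : ⋂ R : ℝ, (Set.Icc (-R) R)ᶜ = ∅ :=
    Set.eq_empty_of_forall_notMem fun x hx =>
      Set.mem_iInter.mp hx |x| ⟨neg_abs_le x, le_abs_self x⟩
  have key := tendsto_measure_iInter_atTop (μ := volume.withDensity f)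
    (fun R => measurableSet_Icc.compl.nullMeasurableSet) hanti
    ⟨0, by rw [withDensity_apply _ measurableSet_Icc.compl]
           exact ne_top_of_le_ne_top hf (setLIntegral_le_lintegral _ _)⟩
  rw [hempty, measure_empty] at key
  refine key.congr fun R => ?_
  exact withDensity_apply _ measurableSet_Icc.compl

theorem HasLongStretches.comp_div {P : ℝ → Prop} (h : HasLongStretches P) {γ : ℝ}
    (hγ : 0 < γ) : HasLongStretches fun y => P (y / γ) := by
  intro M _
  obtain ⟨x, hx⟩ := h (max 1 (M / γ)) (le_max_left _ _)
  refine ⟨γ * x, ?_⟩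
  filter_upwards [(Real.quasiMeasurePreserving_div_const hγ.ne').ae hx] with y hy hyI
  have hM : M ≤ max 1 (M / γ) * γ := (div_le_iff₀ hγ).mp (le_max_right _ _)
  refine hy ⟨?_, ?_⟩
  · rw [le_div_iff₀ hγ]
    linarith [hyI.1]
  · rw [div_lt_iff₀ hγ]
    linarith [hyI.2]

theorem HasLongStretches.exists_shift_Icc {P : ℝ → Prop} (h : HasLongStretches P) {R : ℝ}
    (hR : 0 ≤ R) : ∃ t : ℝ, ∀ᵐ x ∂(volume : Measure ℝ), x ∈ Set.Icc (-R) R → P (x + t) := by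
  obtain ⟨x₀, hx₀⟩ := h (2 * R + 1) (by linarith)
  refine ⟨x₀ + R, ?_⟩
  filter_upwards [(measurePreserving_add_right volume (x₀ + R)).quasiMeasurePreserving.ae hx₀]
    with x hx hxI
  exact hx ⟨by linarith [hxI.1], by linarith [hxI.2]⟩

section Energy

variable {W : ℝ → ℝ}

theorem energyDensity_mono (hW : ∀ s, 0 ≤ W s) {α α' β β' u : ℝ → ℝ} {x : ℝ}
    (hα : α x ≤ α' x) (hβ : β x ≤ β' x) :
    energyDensity W α β u x ≤ energyDensity W α' β' u x := by
  unfold energyDensity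
  gcongr
  exact hW _

theorem energy_mono (hW : ∀ s, 0 ≤ W s) {α α' β β' : ℝ → ℝ} (hα : ∀ᵐ x, α x ≤ α' x)
    (hβ : ∀ᵐ x, β x ≤ β' x) (u : ℝ → ℝ) : energy W α β u ≤ energy W α' β' u :=
  lintegral_mono_ae (by filter_upwards [hα, hβ] with x using energyDensity_mono hW)

theorem surfaceTension_mono (hW : ∀ s, 0 ≤ W s) {α α' β β' : ℝ → ℝ} (hα : ∀ᵐ x, α x ≤ α' x)
    (hβ : ∀ᵐ x, β x ≤ β' x) : surfaceTension W α β ≤ surfaceTension W α' β' :=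
  iInf₂_mono fun u _ => energy_mono hW hα hβ u

theorem energy_const_mul {k : ℝ} (hk : 0 ≤ k) (α β u : ℝ → ℝ) :
    energy W (fun x => k * α x) (fun x => k * β x) u = ENNReal.ofReal k * energy W α β u := by
  rw [energy, energy, ← lintegral_const_mul' _ _ ENNReal.ofReal_ne_top]
  refine lintegral_congr fun x => ?_
  rw [energyDensity, energyDensity, ← ENNReal.ofReal_mul hk]
  ring_nf

theorem energy_comp_sub_const (α β u : ℝ → ℝ) (t : ℝ) :
    energy W α β (fun y => u (y - t)) = energy W (fun x => α (x + t)) (fun x => β (x + t)) u := by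
  rw [energy, ← lintegral_add_right_eq_self _ t]
  simp [energy, energyDensity, deriv_comp_sub_const]

theorem energy_const_comp_mul_left (u : ℝ → ℝ) {c : ℝ} (hc : 0 < c) (a b : ℝ) :
    energy W (fun _ => a) (fun _ => b) (fun y => u (c * y))
      = energy W (fun _ => a * c) (fun _ => b / c) u := by
  have h := Real.lintegral_comp_mul_left
    (fun y => ENNReal.ofReal (a * c ^ 2 * deriv u y ^ 2 / 2 + b * W (u y))) hc.ne'
  rw [abs_of_pos (inv_pos.mpr hc), ← lintegral_const_mul' _ _ ENNReal.ofReal_ne_top] at h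
  simp only [energy, energyDensity, deriv_comp_mul_left, smul_eq_mul]
  convert h using 3 with x x
  · ring_nf
  · rw [← ENNReal.ofReal_mul (inv_pos.mpr hc).le]
    field_simp

theorem sigmaW_eq_surfaceTension : sigmaW W = surfaceTension W (fun _ => 1) (fun _ => 1) := by
  simp only [sigmaW, surfaceTension, energy, energyDensity, one_mul]

theorem surfaceTension_const {a b : ℝ} (ha : 0 < a) (hb : 0 < b) :
    surfaceTension W (fun _ => a) (fun _ => b) = ENNReal.ofReal √(a * b) * sigmaW W := by
  set c := √(b / a)
  have hc : 0 < c := Real.sqrt_pos.mpr (div_pos hb ha)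
  have hac : a * c = √(a * b) := by
    rw [show a * b = a ^ 2 * (b / a) by field_simp, Real.sqrt_mul (sq_nonneg a),
      Real.sqrt_sq ha.le]
  have hbc : b / c = √(a * b) := by
    rw [div_eq_iff hc.ne', ← Real.sqrt_mul (mul_pos ha hb).le,
      show a * b * (b / a) = b ^ 2 by field_simp, Real.sqrt_sq hb.le]
  have hs : 0 < √(a * b) := Real.sqrt_pos.mpr (mul_pos ha hb)
  have hscale (u : ℝ → ℝ) : energy W (fun _ => a) (fun _ => b) (fun y => u (c * y))
      = ENNReal.ofReal √(a * b) * energy W (fun _ => 1) (fun _ => 1) u := by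
    rw [energy_const_comp_mul_left u hc, hac, hbc, ← energy_const_mul hs.le]
    simp only [mul_one]
  rw [surfaceTension, ← iInf_admissibleProfile_comp_mul_left _ hc, sigmaW_eq_surfaceTension,
    surfaceTension]
  simp_rw [hscale, ENNReal.mul_iInf_of_ne (ENNReal.ofReal_pos.mpr hs).ne' ENNReal.ofReal_ne_top]

theorem energy_const_le_ofReal_mul (hW : ∀ s, 0 ≤ W s) {a b A B : ℝ} (ha : 0 < a) (hb : 0 < b)
    (hA : 0 ≤ A) (u : ℝ → ℝ) :
    energy W (fun _ => A) (fun _ => B) u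
      ≤ ENNReal.ofReal (max (A / a) (B / b)) * energy W (fun _ => a) (fun _ => b) u := by
  rw [← energy_const_mul (le_max_of_le_left (div_nonneg hA ha.le))]
  refine energy_mono hW (ae_of_all _ fun _ => ?_) (ae_of_all _ fun _ => ?_) u
  · exact (div_le_iff₀ ha).mp (le_max_left _ _)
  · exact (div_le_iff₀ hb).mp (le_max_right _ _)

theorem energy_le_add_setLIntegral_compl (hW : ∀ s, 0 ≤ W s) {s : Set ℝ} (hs : MeasurableSet s)
    {α β : ℝ → ℝ} {a b A B : ℝ} (heq : ∀ᵐ x, x ∈ s → α x = a ∧ β x = b)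
    (hα : ∀ᵐ x, α x ≤ A) (hβ : ∀ᵐ x, β x ≤ B) (u : ℝ → ℝ) :
    energy W α β u ≤ energy W (fun _ => a) (fun _ => b) u
      + ∫⁻ x in sᶜ, energyDensity W (fun _ => A) (fun _ => B) u x := by
  rw [energy, ← lintegral_add_compl _ hs]
  gcongr ?_ + ?_
  · calc ∫⁻ x in s, energyDensity W α β u x
        = ∫⁻ x in s, energyDensity W (fun _ => a) (fun _ => b) u x := by
          refine setLIntegral_congr_fun_ae hs ?_
          filter_upwards [heq] with x hx hxs
          simp only [energyDensity, hx hxs]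
      _ ≤ _ := setLIntegral_le_lintegral _ _
  · exact lintegral_mono_ae (ae_restrict_of_ae (by
      filter_upwards [hα, hβ] with x h₁ h₂ using energyDensity_mono hW h₁ h₂))

theorem surfaceTension_le_of_hasLongStretches (hW : ∀ s, 0 ≤ W s) {α β : ℝ → ℝ}
    {a b A B : ℝ} (ha : 0 < a) (hb : 0 < b) (hA : 0 ≤ A)
    (hα : ∀ᵐ x, α x ≤ A) (hβ : ∀ᵐ x, β x ≤ B)
    (hstretch : HasLongStretches fun x => α x = a ∧ β x = b) :
    surfaceTension W α β ≤ surfaceTension W (fun _ => a) (fun _ => b) := by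
  refine le_iInf₂ fun w hw => ?_
  by_cases hE : energy W (fun _ => a) (fun _ => b) w = ∞
  · exact hE ▸ le_top
  have htail := tendsto_setLIntegral_compl_Icc <| ne_top_of_le_ne_top
    (ENNReal.mul_ne_top ENNReal.ofReal_ne_top hE)
    (energy_const_le_ofReal_mul (B := B) hW ha hb hA w)
  have hshift (t : ℝ) := (measurePreserving_add_right volume t).quasiMeasurePreserving
  have hbound : ∀ R : ℝ, 0 ≤ R → surfaceTension W α β ≤ energy W (fun _ => a) (fun _ => b) w
      + ∫⁻ x in (Set.Icc (-R) R)ᶜ, energyDensity W (fun _ => A) (fun _ => B) w x := by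
    intro R hR
    obtain ⟨t, ht⟩ := hstretch.exists_shift_Icc hR
    calc surfaceTension W α β ≤ energy W α β (fun y => w (y - t)) :=
          iInf₂_le _ (hw.comp_sub_const t)
      _ = energy W (fun x => α (x + t)) (fun x => β (x + t)) w := energy_comp_sub_const _ _ _ _
      _ ≤ _ := energy_le_add_setLIntegral_compl hW measurableSet_Icc ht
          ((hshift t).ae hα) ((hshift t).ae hβ) w
  simpa using ge_of_tendsto (tendsto_const_nhds.add htail) (eventually_atTop.mpr ⟨0, hbound⟩)

end Energy

theorem minimization_deviation_general (W : ℝ → ℝ) (hWnn : ∀ s, 0 ≤ W s)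
    (lam Lam thetaLow thetaHigh : ℝ)
    (hlam : 0 < lam) (hLam : lam ≤ Lam) (hth : 0 < thetaLow)
    (a θ : ℝ → ℝ)
    (hab : ∀ᵐ y ∂(volume : Measure ℝ), lam ≤ a y ∧ a y ≤ Lam)
    (hθb : ∀ᵐ y ∂(volume : Measure ℝ), thetaLow ≤ θ y ∧ θ y ≤ thetaHigh)
    (hrare : ∀ M : ℝ, 1 ≤ M → ∃ x : ℝ,
      ∀ᵐ y ∂(volume : Measure ℝ), y ∈ Set.Ico x (x + M) → a y = lam ∧ θ y = thetaLow)
    (γ : ℝ) (hγ : 0 < γ) :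
    (⨅ (u : ℝ → ℝ) (_ : AdmissibleProfile u),
        ∫⁻ x : ℝ, ENNReal.ofReal (a (x / γ) * (deriv u x) ^ 2 / 2 + θ (x / γ) * W (u x)))
      = ENNReal.ofReal (Real.sqrt (thetaLow * lam)) * sigmaW W := by
  have hdiv := Real.quasiMeasurePreserving_div_const hγ.ne'
  have hab' := hdiv.ae hab
  have hθb' := hdiv.ae hθb
  change surfaceTension W (fun x => a (x / γ)) (fun x => θ (x / γ)) = _
  rw [mul_comm thetaLow, ← surfaceTension_const hlam hth]
  refine le_antisymm ?_
    (surfaceTension_mono hWnn (hab'.mono fun _ h => h.1) (hθb'.mono fun _ h => h.1))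
  exact surfaceTension_le_of_hasLongStretches hWnn hlam hth (hlam.le.trans hLam)
    (hab'.mono fun _ h => h.2) (hθb'.mono fun _ h => h.2) (HasLongStretches.comp_div hrare hγ)

/-- **Proposition 5.1 (minimization deviation), deterministic form.** If the one-dimensional
medium `(a, θ)` has, for every `M ≥ 1`, a stretch of length `M` where `a = λ` and `θ = θ_*`
(the minimal values), then for every `γ > 0` the surface tension of the medium at scale `γ`
equals `σ_W √(θ_* λ)`. -/
theorem minimization_deviation (W : ℝ → ℝ) (hWc : Continuous W) (hWnn : ∀ s, 0 ≤ W s)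
    (hWzero : ∀ s, W s = 0 ↔ s = 1 ∨ s = -1)
    (lam Lam thetaLow thetaHigh : ℝ)
    (hlam : 0 < lam) (hLam : lam ≤ Lam) (hth : 0 < thetaLow) (hTh : thetaLow ≤ thetaHigh)
    (a θ : ℝ → ℝ) (ha : Measurable a) (hθ : Measurable θ)
    (hab : ∀ᵐ y ∂(volume : Measure ℝ), lam ≤ a y ∧ a y ≤ Lam)
    (hθb : ∀ᵐ y ∂(volume : Measure ℝ), thetaLow ≤ θ y ∧ θ y ≤ thetaHigh)
    (hrare : ∀ M : ℝ, 1 ≤ M → ∃ x : ℝ,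
      ∀ᵐ y ∂(volume : Measure ℝ), y ∈ Set.Ico x (x + M) → a y = lam ∧ θ y = thetaLow)
    (γ : ℝ) (hγ : 0 < γ) :
    (⨅ (u : ℝ → ℝ) (_ : AdmissibleProfile u),
        ∫⁻ x : ℝ, ENNReal.ofReal (a (x / γ) * (deriv u x) ^ 2 / 2 + θ (x / γ) * W (u x)))
      = ENNReal.ofReal (Real.sqrt (thetaLow * lam)) * sigmaW W :=
  minimization_deviation_general W hWnn lam Lam thetaLow thetaHigh hlam hLam hth a θ hab hθb hrare γ
    hγ
end

section
/- Let d ≥ 1, r > 0, α ∈ (0, 1], C > 0, and let Q ⊆ ℝᵈ be a closed cube of side length r. For every ε > 0 there exists δ > 0 (depending only on ε, r, d, α, C, and W) such that the following holds: every continuous function u : Q → [−1, 1] satisfying |u(x) − u(y)| ≤ C |x − y|^α for all x, y ∈ Q and ∫_Q W(u(x)) dx < δ satisfies either sup_{x∈Q} |u(x) − 1| < ε or sup_{x∈Q} |u(x) + 1| < ε. -/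
open MeasureTheory Set Filter Topology

/-!
Let `e = min ε 1`. Away from the wells, on `[-1 + e/2, 1 - e/2]`, the potential is bounded
below by some `m > 0`. If `u` is close to neither well, then by the intermediate value theorem
it takes a value in `[-1 + e, 1 - e]` at some point `p` of the cube, and by Hölder continuity it
stays in `[-1 + e/2, 1 - e/2]` on a sub-cube of side `ρ` around `p`, where `ρ` depends only on
`e, r, d, α, C`. Then `∫_Q W(u) ≥ m ρ^d`, which is the required `δ`.
-/

theorem exists_pos_forall_le_of_zero_iff {W : ℝ → ℝ} (hWc : Continuous W)
    (hWnn : ∀ s, 0 ≤ W s) (hWzero : ∀ s, W s = 0 ↔ s = 1 ∨ s = -1) {η : ℝ}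
    (hη : 0 < η) :
    ∃ m, 0 < m ∧ ∀ s ∈ Icc (-1 + η) (1 - η), m ≤ W s :=
  isCompact_Icc.exists_forall_le' hWc.continuousOn fun s hs =>
    (hWnn s).lt_of_ne' fun h => by
      rcases (hWzero s).1 h with rfl | rfl <;> linarith [hs.1, hs.2]

theorem IsPreconnected.exists_mem_Icc_of_le_of_le {X : Type*} [TopologicalSpace X] {S : Set X}
    (hS : IsPreconnected S) {u : X → ℝ} (hu : ContinuousOn u S) {x y : X} (hx : x ∈ S)
    (hy : y ∈ S) {a b : ℝ} (hab : a ≤ b) (hxb : u x ≤ b) (hay : a ≤ u y) :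
    ∃ p ∈ S, u p ∈ Icc a b := by
  rcases le_or_gt a (u x) with hax | hxa
  · exact ⟨x, hx, hax, hxb⟩
  · obtain ⟨p, hp, hpa⟩ := hS.intermediate_value hx hy hu ⟨hxa.le, hay⟩
    exact ⟨p, hp, by rw [hpa]; exact ⟨le_rfl, hab⟩⟩

theorem exists_Icc_add_subset_Icc_add {ι : Type*} {z p : ι → ℝ} {r ρ : ℝ}
    (hp : p ∈ Icc z fun i => z i + r) (hρ : 0 ≤ ρ) (hρr : ρ ≤ r) :
    ∃ a : ι → ℝ, (Icc a fun i => a i + ρ) ⊆ (Icc z fun i => z i + r) ∧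
      p ∈ Icc a fun i => a i + ρ := by
  refine ⟨fun i => min (p i) (z i + r - ρ), fun q hq => ⟨fun i => ?_, fun i => ?_⟩,
    fun i => min_le_left _ _, fun i => ?_⟩
  · exact (le_min (hp.1 i) (by linarith)).trans (hq.1 i)
  · exact (hq.2 i).trans (by linarith [min_le_right (p i) (z i + r - ρ)])
  · rcases min_cases (p i) (z i + r - ρ) with ⟨h, -⟩ | ⟨h, -⟩ <;>
      simp only [h] <;> linarith [hp.2 i]

theorem sqrt_sum_sq_sub_le_of_mem_Icc_add {ι : Type*} [Fintype ι] {a p q : ι → ℝ} {ρ : ℝ}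
    (hp : p ∈ Icc a fun i => a i + ρ) (hq : q ∈ Icc a fun i => a i + ρ) :
    √(∑ i, (q i - p i) ^ 2) ≤ √(Fintype.card ι) * ρ := by
  have hsum : ∑ i, (q i - p i) ^ 2 ≤ ∑ _i : ι, ρ ^ 2 :=
    Finset.sum_le_sum fun i _ =>
      sq_le_sq' (by linarith [hp.2 i, hq.1 i]) (by linarith [hp.1 i, hq.2 i])
  rcases isEmpty_or_nonempty ι with hι | ⟨⟨i⟩⟩
  · simp
  calc √(∑ i, (q i - p i) ^ 2) ≤ √(Fintype.card ι * ρ ^ 2) := by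
        simpa using Real.sqrt_le_sqrt hsum
    _ = √(Fintype.card ι) * ρ := by
        rw [Real.sqrt_mul (Nat.cast_nonneg _),
          Real.sqrt_sq (by linarith [hp.1 i, hp.2 i])]

theorem exists_mem_Ioc_mul_mul_rpow_lt {α : ℝ} (hα : 0 < α) (C c : ℝ) {η r : ℝ} (hη : 0 < η)
    (hr : 0 < r) : ∃ ρ ∈ Ioc 0 r, C * (c * ρ) ^ α < η := by
  have hcont : ContinuousAt (fun ρ : ℝ => C * (c * ρ) ^ α) 0 :=
    continuousAt_const.mul
      ((continuousAt_const.mul continuousAt_id).rpow_const (.inr hα.le))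
  have hlim := hcont.tendsto
  simp only [mul_zero, Real.zero_rpow hα.ne'] at hlim
  have hsmall : ∀ᶠ ρ in 𝓝[>] 0, C * (c * ρ) ^ α < η :=
    nhdsWithin_le_nhds (hlim.eventually (gt_mem_nhds hη))
  exact (hsmall.and (Ioc_mem_nhdsGT hr)).exists.imp fun ρ h => ⟨h.2, h.1⟩

theorem mul_pow_le_setIntegral_of_Icc_add_subset {ι : Type*} [Fintype ι] {f : (ι → ℝ) → ℝ}
    {Q : Set (ι → ℝ)} {a : ι → ℝ} {ρ m : ℝ} (hρ : 0 ≤ ρ) (hf : IntegrableOn f Q)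
    (hf0 : ∀ x, 0 ≤ f x) (hBQ : (Icc a fun i => a i + ρ) ⊆ Q)
    (hm : ∀ x ∈ Icc a fun i => a i + ρ, m ≤ f x) :
    m * ρ ^ Fintype.card ι ≤ ∫ x in Q, f x := by
  have hvol : volume.real (Icc a fun i => a i + ρ) = ρ ^ Fintype.card ι := by
    simp [Measure.real, Real.volume_Icc_pi_toReal (fun i => le_add_of_nonneg_right hρ)]
  calc m * ρ ^ Fintype.card ι = m * volume.real (Icc a fun i => a i + ρ) := by rw [hvol]
    _ ≤ ∫ x in Icc a fun i => a i + ρ, f x :=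
        setIntegral_ge_of_const_le_real measurableSet_Icc measure_Icc_lt_top.ne hm
          (hf.mono_set hBQ)
    _ ≤ ∫ x in Q, f x := setIntegral_mono_set hf (.of_forall fun x => hf0 x) hBQ.eventuallyLE

theorem clearing_out_general (d : ℕ) (r : ℝ) (hr : 0 < r)
    (α : ℝ) (hα0 : 0 < α) (C : ℝ) (hC : 0 < C)
    (W : ℝ → ℝ) (hWc : Continuous W) (hWnn : ∀ s, 0 ≤ W s)
    (hWzero : ∀ s, W s = 0 ↔ s = 1 ∨ s = -1)
    (ε : ℝ) (hε : 0 < ε) :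
    ∃ δ : ℝ, 0 < δ ∧
      ∀ z : Fin d → ℝ, ∀ u : (Fin d → ℝ) → ℝ,
        ContinuousOn u (Set.Icc z (fun i => z i + r)) →
        (∀ x ∈ Set.Icc z (fun i => z i + r), u x ∈ Set.Icc (-1 : ℝ) 1) →
        (∀ x ∈ Set.Icc z (fun i => z i + r), ∀ y ∈ Set.Icc z (fun i => z i + r),
          |u x - u y| ≤ C * Real.sqrt (∑ i, (x i - y i) ^ 2) ^ α) →
        (∫ x in Set.Icc z (fun i => z i + r), W (u x)) < δ →
        (∀ x ∈ Set.Icc z (fun i => z i + r), |u x - 1| < ε) ∨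
          (∀ x ∈ Set.Icc z (fun i => z i + r), |u x + 1| < ε) := by
  obtain ⟨e, he0, he1, heε⟩ : ∃ e, 0 < e ∧ e ≤ 1 ∧ e ≤ ε :=
    ⟨min ε 1, lt_min hε one_pos, min_le_right _ _, min_le_left _ _⟩
  obtain ⟨m, hm0, hWm⟩ := exists_pos_forall_le_of_zero_iff hWc hWnn hWzero (half_pos he0)
  obtain ⟨ρ, ⟨hρ0, hρr⟩, hρ⟩ := exists_mem_Ioc_mul_mul_rpow_lt hα0 C √d (half_pos he0) hr
  refine ⟨m * ρ ^ d, by positivity, fun z u hu hrange hhold hint => ?_⟩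
  by_contra! ⟨⟨x, hx, hx1⟩, ⟨y, hy, hy1⟩⟩
  have hxb : u x ≤ 1 - e := by
    rw [abs_of_nonpos (by linarith [(hrange x hx).2])] at hx1; linarith
  have hay : -1 + e ≤ u y := by
    rw [abs_of_nonneg (by linarith [(hrange y hy).1])] at hy1; linarith
  obtain ⟨p, hp, hup⟩ := (convex_Icc z _).isPreconnected.exists_mem_Icc_of_le_of_le hu hx hy
    (by linarith) hxb hay
  obtain ⟨a, hBQ, hpB⟩ := exists_Icc_add_subset_Icc_add hp hρ0.le hρr
  have hWB : ∀ q ∈ Icc a fun i => a i + ρ, m ≤ W (u q) := fun q hq => by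
    have hclose : |u q - u p| < e / 2 := calc
      |u q - u p| ≤ C * √(∑ i, (q i - p i) ^ 2) ^ α := hhold q (hBQ hq) p hp
      _ ≤ C * (√d * ρ) ^ α := by
        gcongr
        simpa using sqrt_sum_sq_sub_le_of_mem_Icc_add hpB hq
      _ < e / 2 := hρ
    exact hWm _ ⟨by linarith [abs_lt.1 hclose, hup.1], by linarith [abs_lt.1 hclose, hup.2]⟩
  have hlow := mul_pow_le_setIntegral_of_Icc_add_subset hρ0.le
    ((hWc.comp_continuousOn hu).integrableOn_compact isCompact_Icc) (fun x => hWnn (u x)) hBQ hWB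
  rw [Fintype.card_fin] at hlow
  exact hint.not_ge hlow

/-- **Lemma 3.7 (clearing-out property).** On a closed cube of side length `r`, a uniformly
`α`-Hölder continuous phase field with values in `[-1, 1]` and sufficiently small potential
energy `∫_Q W(u)` must be uniformly close to one of the two wells `±1`; the smallness
threshold `δ` depends only on `ε, r, d, α, C` and `W`. -/
theorem clearing_out (d : ℕ) (hd : 1 ≤ d) (r : ℝ) (hr : 0 < r)
    (α : ℝ) (hα0 : 0 < α) (hα1 : α ≤ 1) (C : ℝ) (hC : 0 < C)
    (W : ℝ → ℝ) (hWc : Continuous W) (hWnn : ∀ s, 0 ≤ W s)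
    (hWzero : ∀ s, W s = 0 ↔ s = 1 ∨ s = -1)
    (ε : ℝ) (hε : 0 < ε) :
    ∃ δ : ℝ, 0 < δ ∧
      ∀ z : Fin d → ℝ, ∀ u : (Fin d → ℝ) → ℝ,
        ContinuousOn u (Set.Icc z (fun i => z i + r)) →
        (∀ x ∈ Set.Icc z (fun i => z i + r), u x ∈ Set.Icc (-1 : ℝ) 1) →
        (∀ x ∈ Set.Icc z (fun i => z i + r), ∀ y ∈ Set.Icc z (fun i => z i + r),
          |u x - u y| ≤ C * Real.sqrt (∑ i, (x i - y i) ^ 2) ^ α) →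
        (∫ x in Set.Icc z (fun i => z i + r), W (u x)) < δ →
        (∀ x ∈ Set.Icc z (fun i => z i + r), |u x - 1| < ε) ∨
          (∀ x ∈ Set.Icc z (fun i => z i + r), |u x + 1| < ε) :=
  clearing_out_general d r hr α hα0 C hC W hWc hWnn hWzero ε hε
end
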